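/- arXiv:1811.02078 — 3 statements merged into one kernel-verified Lean document; each statement's English description precedes it below -/
import Mathlib

section
/- Let l be a positive integer and let SUM : [2^w + σ] → {0,...,l} be a function arising from an injective encoding of all binary strings of length l into pairs (k, s) with k ∈ [2^w + σ] and s ∈ {0,1}^(l-w), such that SUM(k) equals the number of ones in the encoded string. Then for every x with 0 ≤ x ≤ l, the preimage SUM⁻¹(x) has size at least C(l,x) · 2^(w-l). -/
theorem stmt_1 (l w σ : ℕ) (hw : 0 < w) (hwl : w ≤ l)
    (E : (Fin l → Bool) → Fin (2 ^ w + σ) × (Fin (l - w) → Bool))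
    (hE : Function.Injective E)
    (SUM : Fin (2 ^ w + σ) → ℕ)
    (hSUM : ∀ A : Fin l → Bool,
      SUM (E A).1 = (Finset.univ.filter fun i => A i = true).card) :
    ∀ x ≤ l,
      Nat.choose l x ≤
        (Finset.univ.filter fun k : Fin (2 ^ w + σ) => SUM k = x).card * 2 ^ (l - w) := by
  classical
  intro x hx
  have hcard : (Finset.powersetCard x (Finset.univ : Finset (Fin l))).card
      = Nat.choose l x := by
    simp [Finset.card_powersetCard]
  have key : (Finset.powersetCard x (Finset.univ : Finset (Fin l))).card ≤
      ((Finset.univ.filter fun k : Fin (2 ^ w + σ) => SUM k = x) ×ˢ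
        (Finset.univ : Finset (Fin (l - w) → Bool))).card := by
    apply Finset.card_le_card_of_injOn (fun s => E (fun i => decide (i ∈ s)))
    · intro s hs
      rw [Finset.mem_coe, Finset.mem_powersetCard] at hs
      rw [Finset.mem_coe, Finset.mem_product]
      refine ⟨?_, Finset.mem_univ _⟩
      rw [Finset.mem_filter]
      refine ⟨Finset.mem_univ _, ?_⟩
      rw [hSUM]
      have : (Finset.univ.filter fun i => decide (i ∈ s) = true) = s := by
        ext i; simp
      rw [this, hs.2]
    · intro s1 _ s2 _ h
      have := hE h
      ext i
      have := congrFun this i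
      simpa using this
  rw [hcard] at key
  calc Nat.choose l x ≤ _ := key
    _ = (Finset.univ.filter fun k : Fin (2 ^ w + σ) => SUM k = x).card * 2 ^ (l - w) := by
        rw [Finset.card_product]
        simp
end

section
/- Under the same hypotheses (injective encoding of {0,1}^l into [2^w+σ] × {0,1}^(l-w) with SUM decoding the number of ones from the first component), for any subset X ⊆ {0,...,l}, the preimage SUM⁻¹(X) has size at most σ + Σ_{x∈X} C(l,x) · 2^(w-l). -/
theorem stmt_2 (l w σ : ℕ) (hw : 0 < w) (hwl : w ≤ l)
    (E : (Fin l → Bool) → Fin (2 ^ w + σ) × (Fin (l - w) → Bool))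
    (hE : Function.Injective E)
    (SUM : Fin (2 ^ w + σ) → ℕ)
    (hSUM : ∀ A : Fin l → Bool,
      SUM (E A).1 = (Finset.univ.filter fun i => A i = true).card) :
    ∀ X : Finset ℕ, X ⊆ Finset.range (l + 1) →
      (Finset.univ.filter fun k : Fin (2 ^ w + σ) => SUM k ∈ X).card * 2 ^ (l - w) ≤
        σ * 2 ^ (l - w) + ∑ x ∈ X, Nat.choose l x := by
  intro X hX
  classical
  set wt : (Fin l → Bool) → ℕ :=
    fun A => (Finset.univ.filter fun i => A i = true).card with hwt
  set P := 2 ^ (l - w) with hP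
  set T := Finset.univ.filter fun k : Fin (2 ^ w + σ) => SUM k ∈ X with hT
  set Tc := Finset.univ.filter fun k : Fin (2 ^ w + σ) => SUM k ∉ X with hTc
  set S := Finset.univ.filter (fun A : Fin l → Bool => wt A ∈ X) with hS
  set Sc := Finset.univ.filter (fun A : Fin l → Bool => wt A ∉ X) with hSc
  have hTTc : T.card + Tc.card = 2 ^ w + σ := by
    rw [hT, hTc, Finset.card_filter_add_card_filter_not]
    simp
  have hSSc : S.card + Sc.card = 2 ^ l := by
    rw [hS, hSc, Finset.card_filter_add_card_filter_not]
    simp [Finset.card_univ]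
  have hPuniv : (Finset.univ : Finset (Fin (l - w) → Bool)).card = P := by
    simp [hP]
  have hScTc : Sc.card ≤ Tc.card * P := by
    have h := Finset.card_le_card_of_injOn (f := E) (s := Sc)
      (t := Tc ×ˢ (Finset.univ : Finset (Fin (l - w) → Bool)))
      (by
        intro A hA
        rw [hSc, Finset.mem_coe, Finset.mem_filter] at hA
        rw [Finset.mem_coe, Finset.mem_product, hTc, Finset.mem_filter]
        refine ⟨⟨Finset.mem_univ _, ?_⟩, Finset.mem_univ _⟩
        rw [hSUM A]
        exact hA.2)
      (fun a _ b _ h => hE h)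
    rwa [Finset.card_product, hPuniv] at h
  have hfiber : ∀ x, (Finset.univ.filter fun A : Fin l → Bool => wt A = x).card ≤
      Nat.choose l x := by
    intro x
    have h := Finset.card_le_card_of_injOn
      (f := fun A : Fin l → Bool => Finset.univ.filter fun i => A i = true)
      (s := Finset.univ.filter fun A : Fin l → Bool => wt A = x)
      (t := Finset.powersetCard x (Finset.univ : Finset (Fin l)))
      (by
        intro A hA
        simp only [Finset.mem_coe, Finset.mem_filter, Finset.mem_univ, true_and] at hA
        rw [Finset.mem_coe, Finset.mem_powersetCard]
        exact ⟨Finset.subset_univ _, hA⟩)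
      (by
        intro A _ B _ hAB
        funext i
        have hi : (i ∈ Finset.univ.filter fun j => A j = true) ↔
            (i ∈ Finset.univ.filter fun j => B j = true) := Finset.ext_iff.mp hAB i
        simp only [Finset.mem_filter, Finset.mem_univ, true_and] at hi
        cases hA : A i <;> cases hB : B i <;> simp_all)
    simpa [Finset.card_powersetCard] using h
  have hSle : S.card ≤ ∑ x ∈ X, Nat.choose l x := by
    have hsub : S ⊆ X.biUnion (fun x => Finset.univ.filter fun A : Fin l → Bool => wt A = x) := by
      intro A hA
      rw [hS, Finset.mem_filter] at hA
      rw [Finset.mem_biUnion]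
      exact ⟨wt A, hA.2, by simp⟩
    calc S.card ≤ _ := Finset.card_le_card hsub
      _ ≤ ∑ x ∈ X, (Finset.univ.filter fun A : Fin l → Bool => wt A = x).card :=
        Finset.card_biUnion_le
      _ ≤ ∑ x ∈ X, Nat.choose l x := Finset.sum_le_sum fun x _ => hfiber x
  have hmul : T.card * P + Tc.card * P = 2 ^ l + σ * P := by
    have h2 : 2 ^ w * P = 2 ^ l := by
      rw [hP, ← pow_add]
      congr 1
      omega
    calc T.card * P + Tc.card * P = (T.card + Tc.card) * P := (add_mul _ _ _).symm
      _ = (2 ^ w + σ) * P := by rw [hTTc]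
      _ = 2 ^ l + σ * P := by rw [add_mul, h2]
  have hfin : 2 ^ l ≤ (∑ x ∈ X, Nat.choose l x) + Tc.card * P := by
    omega
  linarith [hmul, hfin]
end

section
/- Let P₁(t) = Σ_{j=1}^{d-1} (1/j)·(−S_j(t−1)·((1−α)l)^{−j} + S_j(t)·(−αl)^{−j}), where S_j(t) = Σ_{i=1}^t i^j, 0 < α ≤ 1/2, l a positive integer. Then for all integers t with 0 ≤ t ≤ √(αl), |P₁(t)| ≤ 4t²/(αl) ≤ 4. -/
open Finset

private lemma alt_aux (r : ℝ) (hr0 : 0 ≤ r) (hr1 : r ≤ 1) (k : ℕ) :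
    (∑ j ∈ Finset.Icc 1 (2*k), (-1:ℝ)^j * r^j / j) ≤ 0 ∧
      -r ≤ ∑ j ∈ Finset.Icc 1 (2*k+1), (-1:ℝ)^j * r^j / j := by
  have hkey : ∀ m : ℕ, 1 ≤ m → r^(m+1) / ((m+1:ℕ) : ℝ) ≤ r^m / ((m:ℕ) : ℝ) := by
    intro m hm
    apply div_le_div₀ (by positivity)
    · calc r^(m+1) = r^m * r := by ring
        _ ≤ r^m * 1 := mul_le_mul_of_nonneg_left hr1 (by positivity)
        _ = r^m := by ring
    · exact_mod_cast Nat.pos_of_ne_zero (by omega)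
    · exact_mod_cast Nat.le_succ m
  induction k with
  | zero => simp
  | succ k ih =>
    obtain ⟨h1, h2⟩ := ih
    have hs1 : ((-1:ℝ))^(2*k+1) = -1 := by
      rw [pow_succ]; simp [pow_mul]
    have hs2 : ((-1:ℝ))^(2*k+1+1) = 1 := by rw [pow_succ, hs1]; ring
    have hs3 : ((-1:ℝ))^(2*k+1+1+1) = -1 := by rw [pow_succ, hs2]; ring
    constructor
    · have e1 : 2*(k+1) = (2*k+1) + 1 := by ring
      rw [e1, Finset.sum_Icc_succ_top (by omega), Finset.sum_Icc_succ_top (by omega),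
        hs1, hs2]
      have hkk := hkey (2*k+1) (by omega)
      have h0 : (0:ℝ) ≤ r^(2*k+1) / ((2*k+1:ℕ):ℝ) := by positivity
      rw [neg_one_mul, one_mul, neg_div]
      linarith
    · have e2 : 2*(k+1)+1 = ((2*k+1) + 1) + 1 := by ring
      rw [e2, Finset.sum_Icc_succ_top (by omega), Finset.sum_Icc_succ_top (by omega),
        hs2, hs3]
      have hkk := hkey (2*k+1+1) (by omega)
      have h0 : (0:ℝ) ≤ r^(2*k+1+1) / ((2*k+1+1:ℕ):ℝ) := by positivity
      rw [neg_one_mul, one_mul, neg_div]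
      linarith

private lemma alt_bound (r : ℝ) (hr0 : 0 ≤ r) (hr1 : r ≤ 1) (n : ℕ) :
    |∑ j ∈ Finset.Icc 1 n, (-1:ℝ)^j * r^j / j| ≤ r := by
  rcases Nat.even_or_odd n with ⟨k, hk⟩ | ⟨k, hk⟩
  · have hn : n = 2*k := by omega
    subst hn
    have h1 := (alt_aux r hr0 hr1 k).1
    rw [abs_le]
    refine ⟨?_, h1.trans hr0⟩
    rcases Nat.eq_zero_or_pos k with hk0 | hk0
    · subst hk0; simp [hr0]
    · obtain ⟨m, hm⟩ : ∃ m, k = m + 1 := ⟨k-1, by omega⟩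
      subst hm
      have h2 := (alt_aux r hr0 hr1 m).2
      have e : 2*(m+1) = (2*m+1) + 1 := by ring
      rw [e, Finset.sum_Icc_succ_top (by omega)]
      have hs2 : ((-1:ℝ))^(2*m+1+1) = 1 := by
        rw [pow_succ, pow_succ]; simp [pow_mul]
      rw [hs2, one_mul]
      have h0 : (0:ℝ) ≤ r^(2*m+1+1) / ((2*m+1+1 : ℕ):ℝ) := by positivity
      linarith
  · subst hk
    have h2 := (alt_aux r hr0 hr1 k).2
    rw [abs_le]
    refine ⟨h2, ?_⟩
    have h1 := (alt_aux r hr0 hr1 k).1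
    rw [Finset.sum_Icc_succ_top (by omega)]
    have hs1 : ((-1:ℝ))^(2*k+1) = -1 := by rw [pow_succ]; simp [pow_mul]
    rw [hs1, neg_one_mul, neg_div]
    have h0 : (0:ℝ) ≤ r^(2*k+1) / ((2*k+1 : ℕ):ℝ) := by positivity
    linarith

private lemma geom_Icc (r : ℝ) (hr0 : 0 ≤ r) (hr2 : r ≤ 1/2) (n : ℕ) :
    ∑ j ∈ Finset.Icc 1 n, r^j ≤ 2*r := by
  have key : ∀ n : ℕ, ∑ j ∈ Finset.Icc 1 n, r^j ≤ 2*r - 2*r^(n+1) := by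
    intro n
    induction n with
    | zero => simp
    | succ n ih =>
      rw [Finset.sum_Icc_succ_top (by omega)]
      have e1 : r^(n+1+1) = r^(n+1) * r := pow_succ r (n+1)
      have h0 : (0:ℝ) ≤ r^(n+1) := pow_nonneg hr0 (n+1)
      nlinarith [mul_nonneg h0 (by linarith : (0:ℝ) ≤ 1 - 2*r)]
  have := key n
  have h0 : (0:ℝ) ≤ r^(n+1) := pow_nonneg hr0 (n+1)
  linarith

private lemma main_ge2 (l : ℕ) (hl : 1 ≤ l) (α : ℝ) (hα0 : 0 < α) (hα2 : α ≤ 1 / 2)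
    (hαl : 1 ≤ α * l) (d : ℕ) (hd : 2 ≤ d)
    (t : ℕ) (ht : (t : ℝ) ≤ Real.sqrt (α * l)) (ht2' : 2 ≤ t) :
    |∑ j ∈ Finset.Icc 1 (d - 1),
        (1 / (j : ℝ)) *
          (-(∑ i ∈ Finset.Icc 1 (t - 1), (i : ℝ) ^ j) * ((1 - α) * l) ^ (-(j : ℤ)) +
            (∑ i ∈ Finset.Icc 1 t, (i : ℝ) ^ j) * (-(α * l)) ^ (-(j : ℤ)))| ≤
      4 * (t : ℝ) ^ 2 / (α * l) := by
  set a := α * (l : ℝ) with ha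
  set B := (1 - α) * (l : ℝ) with hB
  have ha0 : (0:ℝ) < a := lt_of_lt_of_le one_pos hαl
  have hl0 : (0:ℝ) ≤ l := Nat.cast_nonneg l
  have hBa : a ≤ B := by rw [ha, hB]; nlinarith
  have hB0 : (0:ℝ) < B := lt_of_lt_of_le ha0 hBa
  have htR : (2:ℝ) ≤ (t:ℝ) := by exact_mod_cast ht2'
  have ht2 : (t:ℝ)^2 ≤ a := by
    have := Real.sq_sqrt ha0.le
    nlinarith [Real.sqrt_nonneg a]
  have hr0 : (0:ℝ) ≤ (t:ℝ)/a := by positivity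
  have hr2 : (t:ℝ)/a ≤ 1/2 := by
    rw [div_le_div_iff₀ ha0 (by norm_num)]
    nlinarith
  have hterm : ∀ j ∈ Finset.Icc 1 (d-1),
      |(1 / (j : ℝ)) *
          (-(∑ i ∈ Finset.Icc 1 (t - 1), (i : ℝ) ^ j) * B ^ (-(j : ℤ)) +
            (∑ i ∈ Finset.Icc 1 t, (i : ℝ) ^ j) * (-a) ^ (-(j : ℤ)))|
        ≤ 2 * (t:ℝ) * ((t:ℝ)/a)^j := by
    intro j hj
    obtain ⟨hj1, hj2⟩ := Finset.mem_Icc.mp hj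
    set A := ∑ i ∈ Finset.Icc 1 (t - 1), (i : ℝ) ^ j with hAdef
    set C := ∑ i ∈ Finset.Icc 1 t, (i : ℝ) ^ j with hCdef
    have hA0 : 0 ≤ A := Finset.sum_nonneg fun i _ => by positivity
    have hC0 : 0 ≤ C := Finset.sum_nonneg fun i _ => by positivity
    have hAC : A ≤ C := by
      apply Finset.sum_le_sum_of_subset_of_nonneg
      · exact Finset.Icc_subset_Icc_right (by omega)
      · intro i _ _; positivity
    have hCt : C ≤ (t:ℝ) * (t:ℝ)^j := by
      calc C ≤ ∑ i ∈ Finset.Icc 1 t, (t:ℝ)^j := by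
            apply Finset.sum_le_sum
            intro i hi
            exact pow_le_pow_left₀ (Nat.cast_nonneg i)
              (by exact_mod_cast (Finset.mem_Icc.mp hi).2) j
        _ = (t:ℝ) * (t:ℝ)^j := by
            rw [Finset.sum_const, Nat.card_Icc]
            simp [nsmul_eq_mul]
    have hjR : (1:ℝ) ≤ (j:ℝ) := by exact_mod_cast hj1
    have hj01 : (1:ℝ)/(j:ℝ) ≤ 1 := by
      rw [div_le_one (by linarith)]; exact hjR
    have hpow : a^j ≤ B^j := pow_le_pow_left₀ ha0.le hBa j
    have hinv : (B^j)⁻¹ ≤ (a^j)⁻¹ := by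
      apply inv_anti₀ (by positivity) hpow
    have habs1 : |(-A) * B ^ (-(j:ℤ))| = A * (B^j)⁻¹ := by
      rw [zpow_neg, zpow_natCast, abs_mul, abs_neg, abs_of_nonneg hA0,
        abs_of_nonneg (by positivity)]
    have habs2 : |C * (-a) ^ (-(j:ℤ))| = C * (a^j)⁻¹ := by
      rw [zpow_neg, zpow_natCast, abs_mul, abs_of_nonneg hC0, abs_inv, abs_pow,
        abs_neg, abs_of_pos ha0]
    calc |(1 / (j : ℝ)) * (-A * B ^ (-(j : ℤ)) + C * (-a) ^ (-(j : ℤ)))|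
        = (1/(j:ℝ)) * |(-A) * B ^ (-(j:ℤ)) + C * (-a) ^ (-(j:ℤ))| := by
          rw [abs_mul, abs_of_nonneg (by positivity)]
      _ ≤ (1/(j:ℝ)) * (|(-A) * B ^ (-(j:ℤ))| + |C * (-a) ^ (-(j:ℤ))|) := by
          gcongr
          exact abs_add_le _ _
      _ = (1/(j:ℝ)) * (A * (B^j)⁻¹ + C * (a^j)⁻¹) := by rw [habs1, habs2]
      _ ≤ 1 * (((t:ℝ) * (t:ℝ)^j) * (a^j)⁻¹ + ((t:ℝ) * (t:ℝ)^j) * (a^j)⁻¹) := by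
          apply mul_le_mul hj01 ?_ (by positivity) (by norm_num)
          have hCa : C * (a^j)⁻¹ ≤ ((t:ℝ) * (t:ℝ)^j) * (a^j)⁻¹ :=
            mul_le_mul_of_nonneg_right hCt (by positivity)
          have hAa : A * (B^j)⁻¹ ≤ C * (a^j)⁻¹ :=
            mul_le_mul hAC hinv (by positivity) hC0
          exact add_le_add (hAa.trans hCa) hCa
      _ = 2 * (t:ℝ) * ((t:ℝ)/a)^j := by
          rw [div_pow, div_eq_mul_inv]
          ring
  calc |∑ j ∈ Finset.Icc 1 (d - 1),
        (1 / (j : ℝ)) *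
          (-(∑ i ∈ Finset.Icc 1 (t - 1), (i : ℝ) ^ j) * B ^ (-(j : ℤ)) +
            (∑ i ∈ Finset.Icc 1 t, (i : ℝ) ^ j) * (-a) ^ (-(j : ℤ)))|
      ≤ ∑ j ∈ Finset.Icc 1 (d - 1),
        |(1 / (j : ℝ)) *
          (-(∑ i ∈ Finset.Icc 1 (t - 1), (i : ℝ) ^ j) * B ^ (-(j : ℤ)) +
            (∑ i ∈ Finset.Icc 1 t, (i : ℝ) ^ j) * (-a) ^ (-(j : ℤ)))| :=
        Finset.abs_sum_le_sum_abs _ _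
    _ ≤ ∑ j ∈ Finset.Icc 1 (d - 1), 2 * (t:ℝ) * ((t:ℝ)/a)^j :=
        Finset.sum_le_sum hterm
    _ = 2 * (t:ℝ) * ∑ j ∈ Finset.Icc 1 (d - 1), ((t:ℝ)/a)^j := by
        rw [Finset.mul_sum]
    _ ≤ 2 * (t:ℝ) * (2 * ((t:ℝ)/a)) := by
        apply mul_le_mul_of_nonneg_left (geom_Icc _ hr0 hr2 _) (by positivity)
    _ = 4 * (t:ℝ)^2 / a := by field_simp; ring

theorem stmt_17 (l : ℕ) (hl : 1 ≤ l) (α : ℝ) (hα0 : 0 < α) (hα2 : α ≤ 1 / 2)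
    (hαl : 1 ≤ α * l) (d : ℕ) (hd : 2 ≤ d)
    (t : ℕ) (ht : (t : ℝ) ≤ Real.sqrt (α * l)) :
    |∑ j ∈ Finset.Icc 1 (d - 1),
        (1 / (j : ℝ)) *
          (-(∑ i ∈ Finset.Icc 1 (t - 1), (i : ℝ) ^ j) * ((1 - α) * l) ^ (-(j : ℤ)) +
            (∑ i ∈ Finset.Icc 1 t, (i : ℝ) ^ j) * (-(α * l)) ^ (-(j : ℤ)))| ≤
      4 * (t : ℝ) ^ 2 / (α * l) ∧
    4 * (t : ℝ) ^ 2 / (α * l) ≤ 4 := by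
  have ha0 : (0:ℝ) < α * l := lt_of_lt_of_le one_pos hαl
  have ht2 : (t:ℝ)^2 ≤ α * l := by
    have := Real.sq_sqrt ha0.le
    nlinarith [Real.sqrt_nonneg (α * l)]
  have hsecond : 4 * (t : ℝ) ^ 2 / (α * l) ≤ 4 := by
    rw [div_le_iff₀ ha0]; nlinarith
  refine ⟨?_, hsecond⟩
  rcases Nat.lt_or_ge t 2 with h2 | h2
  · interval_cases t
    · have he : Finset.Icc 1 0 = (∅ : Finset ℕ) := by
        apply Finset.Icc_eq_empty; omega
      simp [he]
    · -- t = 1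
      have he : Finset.Icc 1 0 = (∅ : Finset ℕ) := by
        apply Finset.Icc_eq_empty; omega
      have hrw : ∀ j ∈ Finset.Icc 1 (d - 1),
          (1 / (j : ℝ)) *
            (-(∑ i ∈ Finset.Icc 1 ((1:ℕ) - 1), (i : ℝ) ^ j) * ((1 - α) * l) ^ (-(j : ℤ)) +
              (∑ i ∈ Finset.Icc 1 (1:ℕ), (i : ℝ) ^ j) * (-(α * l)) ^ (-(j : ℤ)))
            = (-1:ℝ)^j * ((α*l)⁻¹)^j / j := by
        intro j hj
        rw [show (1:ℕ) - 1 = 0 from rfl, he]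
        rw [Finset.Icc_self, Finset.sum_singleton]
        have hz : (-(α*l)) ^ (-(j:ℤ)) = (-1:ℝ)^j * ((α*l)⁻¹)^j := by
          rw [zpow_neg, zpow_natCast, neg_pow, mul_inv, inv_pow]
          congr 1
          rcases Nat.even_or_odd j with hj' | hj'
          · rw [hj'.neg_one_pow]; norm_num
          · rw [hj'.neg_one_pow]; norm_num
        rw [hz]
        simp
        ring
      rw [Finset.sum_congr rfl hrw]
      have hia : (α*l)⁻¹ ≤ 1 := by
        rw [inv_le_one_iff₀]; right; exact hαl
      have := alt_bound ((α*l)⁻¹) (by positivity) hia (d-1)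
      have h4 : (α*l)⁻¹ ≤ 4 * (1:ℝ)^2 / (α*l) := by
        rw [one_pow, mul_one, div_eq_mul_inv]
        have : 0 < (α*(l:ℝ))⁻¹ := inv_pos.mpr ha0
        linarith
      calc |∑ j ∈ Finset.Icc 1 (d-1), (-1:ℝ)^j * ((α*l)⁻¹)^j / j| ≤ (α*l)⁻¹ := this
        _ ≤ 4 * ((1:ℕ):ℝ)^2 / (α*l) := by push_cast; push_cast at h4; linarith
  · exact main_ge2 l hl α hα0 hα2 hαl d hd t ht h2
end
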